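/- Let K, k ≥ 2 be integers, and for integers i ≥ 1 set c_i := ∑_{(i−1)k < j ≤ ik} binomial(j + K − 1, K − 1). Then: (a) c_i ≤ K^K · (ik)^K for all i ≥ 1; and (b) for every prime p and every real s > 1, ∑_{j ≥ 1} τ_K(p^j) · (p^j / rad_k(p^j)) · p^{−js} ≤ 1 + ∑_{i ≥ 1} c_i · p^{−is}. -/

import Mathlib

/-!
On prime powers everything is explicit. Counting exponent vectors gives
`τ_K(p^(j+1)) = binom(j + K, K - 1)`, and since the largest of `k` exponents summing to `j + 1`
is at least `⌈(j + 1)/k⌉ = ⌊j/k⌋ + 1`, we get `rad_k(p^(j+1)) ≥ p^(⌊j/k⌋ + 1)`. With `y = p^(-s)`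
and `p y ≤ 1`, the `j`-th term is then at most `binom(j + K, K - 1) y^(⌊j/k⌋ + 1)`, and grouping
the indices `j` into blocks of length `k` turns this majorant into `∑ c_i y^i`. Part (a) bounds
each of the at most `ik` binomials in `c_i` by `(ikK)^(K-1)`; it also makes the majorant summable.
-/

/-- `τ_K(n)`: the number of `K`-tuples of positive integers with product `n`. -/
noncomputable def tauNat (K n : ℕ) : ℕ :=
  Nat.card {d : Fin K → ℕ // (∀ i, 0 < d i) ∧ ∏ i, d i = n}

/-- `rad_k(n)`: the minimum of `lcm(n₁,…,n_k)` over factorizations `n = n₁⋯n_k`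
into positive integers. -/
noncomputable def radk (k n : ℕ) : ℕ :=
  sInf {m : ℕ | ∃ d : Fin k → ℕ, (∀ i, 0 < d i) ∧ ∏ i, d i = n ∧ Finset.univ.lcm d = m}

/-- `c_i := ∑_{(i−1)k < j ≤ ik} binom(j + K − 1, K − 1)`. -/
def cCoeff (K k i : ℕ) : ℕ :=
  ∑ j ∈ Finset.Ioc ((i - 1) * k) (i * k), Nat.choose (j + K - 1) (K - 1)

theorem exists_eq_pow_of_prod_eq_prime_pow {ι : Type*} [Fintype ι] {p n : ℕ} (hp : p.Prime)
    {d : ι → ℕ} (hd : ∏ i, d i = p ^ n) : ∃ a : ι → ℕ, ∑ i, a i = n ∧ ∀ i, d i = p ^ a i := by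
  have hdvd (i : ι) : ∃ a, a ≤ n ∧ d i = p ^ a :=
    (Nat.dvd_prime_pow hp).1 (hd ▸ Finset.dvd_prod_of_mem d (Finset.mem_univ i))
  choose a _ ha using hdvd
  refine ⟨a, Nat.pow_right_injective hp.two_le ?_, ha⟩
  simp only [← Finset.prod_pow_eq_pow_sum, ← ha, hd]

theorem hasSum_of_hasSum_sum_mul_add {f : ℕ → ℝ} (hf : 0 ≤ f) (k : ℕ) [NeZero k] {a : ℝ}
    (h : HasSum (fun i => ∑ r : Fin k, f (i * k + r)) a) : HasSum f a := by
  rw [← (Nat.divModEquiv k).symm.hasSum_iff]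
  have hrows : (fun i => ∑' r, (f ∘ (Nat.divModEquiv k).symm) (i, r)) =
      fun i => ∑ r : Fin k, f (i * k + r) :=
    funext fun _ => tsum_fintype _
  have hG : Summable (f ∘ (Nat.divModEquiv k).symm) :=
    (summable_prod_of_nonneg fun _ => hf _).2 ⟨fun _ => .of_finite, hrows ▸ h.summable⟩
  convert hG.hasSum
  exact h.unique (hrows ▸ hG.hasSum.prod_fiberwise fun _ => Summable.of_finite.hasSum)

theorem rpow_neg_natCast_add_one_mul {x : ℝ} (hx : 0 ≤ x) (s : ℝ) (n : ℕ) :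
    x ^ (-(((n : ℝ) + 1) * s)) = (x ^ (-s)) ^ (n + 1) := by
  rw [← Real.rpow_natCast, ← Real.rpow_mul hx]
  push_cast
  ring_nf

theorem tauNat_prime_pow {p : ℕ} (hp : p.Prime) {K : ℕ} (hK : 1 ≤ K) (n : ℕ) :
    tauNat K (p ^ n) = (n + K - 1).choose (K - 1) := by
  let e : {a : Fin K → ℕ // ∑ i, a i = n} ≃
      {d : Fin K → ℕ // (∀ i, 0 < d i) ∧ ∏ i, d i = p ^ n} := by
    refine Equiv.ofBijective
      (fun a => ⟨fun i => p ^ a.1 i, fun i => pow_pos hp.pos _, by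
        rw [Finset.prod_pow_eq_pow_sum, a.2]⟩) ⟨fun a b hab => ?_, fun d => ?_⟩
    · exact Subtype.ext <| funext fun i =>
        Nat.pow_right_injective hp.two_le (congrArg (fun d => d.1 i) hab)
    · obtain ⟨a, hsum, ha⟩ := exists_eq_pow_of_prod_eq_prime_pow hp d.2.2
      exact ⟨⟨a, hsum⟩, Subtype.ext (funext fun i => (ha i).symm)⟩
  rw [tauNat, ← Nat.card_congr e, ← Nat.card_congr (Sym.equivNatSumOfFintype (Fin K) n),
    Nat.card_eq_fintype_card, Sym.card_sym_eq_choose, Fintype.card_fin,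
    show K + n - 1 = n + (K - 1) by omega, show n + K - 1 = n + (K - 1) by omega,
    Nat.choose_symm_add]

theorem pow_ceilDiv_le_lcm {p n k : ℕ} (hp : p.Prime) (hk : 0 < k) {d : Fin k → ℕ}
    (hd : ∀ i, 0 < d i) (hprod : ∏ i, d i = p ^ n) : p ^ (n ⌈/⌉ k) ≤ Finset.univ.lcm d := by
  obtain ⟨a, hsum, ha⟩ := exists_eq_pow_of_prod_eq_prime_pow hp hprod
  obtain ⟨i₀, -, hi₀⟩ := Finset.exists_mem_eq_sup Finset.univ ⟨⟨0, hk⟩, Finset.mem_univ _⟩ a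
  have hn : n ≤ k * a i₀ := by
    calc n = ∑ i, a i := hsum.symm
      _ ≤ Finset.univ.card • Finset.univ.sup a :=
        Finset.sum_le_card_nsmul _ _ _ fun i _ => Finset.le_sup (Finset.mem_univ i)
      _ = k * a i₀ := by rw [Finset.card_univ, Fintype.card_fin, smul_eq_mul, hi₀]
  have hlcm : 0 < Finset.univ.lcm d :=
    Nat.pos_of_ne_zero fun h => by
      obtain ⟨i, -, hi⟩ := Finset.lcm_eq_zero_iff.1 h
      exact (hd i).ne' hi
  calc p ^ (n ⌈/⌉ k) ≤ p ^ a i₀ :=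
        Nat.pow_le_pow_right hp.pos ((ceilDiv_le_iff_le_mul hk).2 hn)
    _ ≤ Finset.univ.lcm d := Nat.le_of_dvd hlcm (ha i₀ ▸ Finset.dvd_lcm (Finset.mem_univ i₀))

theorem pow_ceilDiv_le_radk {p k : ℕ} (hp : p.Prime) (hk : 0 < k) (n : ℕ) :
    p ^ (n ⌈/⌉ k) ≤ radk k (p ^ n) := by
  refine le_csInf ⟨_, fun i => if i = ⟨0, hk⟩ then p ^ n else 1, fun i => ?_, by simp, rfl⟩ ?_
  · dsimp only
    split
    exacts [pow_pos hp.pos n, one_pos]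
  · rintro _ ⟨d, hd, hprod, rfl⟩
    exact pow_ceilDiv_le_lcm hp hk hd hprod

theorem cCoeff_le (K k i : ℕ) (hK : 1 ≤ K) : cCoeff K k i ≤ K ^ K * (i * k) ^ K := by
  have hterm : ∀ j ∈ Finset.Ioc ((i - 1) * k) (i * k),
      (j + K - 1).choose (K - 1) ≤ (i * k * K) ^ (K - 1) := by
    intro j hj
    obtain ⟨hj₁, hj₂⟩ := Finset.mem_Ioc.1 hj
    have hik : 1 ≤ i * k := by omega
    have : j + K - 1 ≤ i * k * K := by
      rw [Nat.sub_le_iff_le_add]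
      nlinarith
    exact (Nat.choose_le_pow _ _).trans (Nat.pow_le_pow_left this _)
  calc cCoeff K k i
      ≤ (Finset.Ioc ((i - 1) * k) (i * k)).card • (i * k * K) ^ (K - 1) :=
        Finset.sum_le_card_nsmul _ _ _ hterm
    _ ≤ i * k * (i * k * K) ^ (K - 1) := by
        rw [smul_eq_mul, Nat.card_Ioc]
        exact Nat.mul_le_mul_right _ (Nat.sub_le _ _)
    _ = (i * k) ^ K * K ^ (K - 1) := by
        rw [mul_pow, ← mul_assoc, ← pow_succ', Nat.sub_add_cancel hK]
    _ ≤ K ^ K * (i * k) ^ K := by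
        rw [mul_comm]
        exact Nat.mul_le_mul_right _ (Nat.pow_le_pow_right (by omega) (Nat.sub_le _ _))

theorem cCoeff_succ (K k i : ℕ) :
    cCoeff K k (i + 1) = ∑ r : Fin k, (i * k + r + K).choose (K - 1) := by
  rw [cCoeff, Nat.add_sub_cancel, add_one_mul, ← Finset.Ico_add_one_add_one_eq_Ioc,
    Finset.sum_Ico_eq_sum_range, Fin.sum_univ_eq_sum_range (fun r => (i * k + r + K).choose _)]
  refine Finset.sum_congr (by congr 1; omega) fun r _ => ?_
  congr 1
  omega

theorem summable_cCoeff_mul_pow (K k : ℕ) (hK : 1 ≤ K) {y : ℝ} (hy₀ : 0 ≤ y) (hy₁ : y < 1) :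
    Summable fun i : ℕ => (cCoeff K k (i + 1) : ℝ) * y ^ (i + 1) := by
  have hgeom : Summable fun i : ℕ => ((i + 1 : ℕ) : ℝ) ^ K * y ^ (i + 1) :=
    (summable_nat_add_iff (f := fun n : ℕ => (n : ℝ) ^ K * y ^ n) 1).2 <|
      summable_pow_mul_geometric_of_norm_lt_one K (by rwa [Real.norm_of_nonneg hy₀])
  refine .of_nonneg_of_le (fun i => by positivity) (fun i => ?_)
    (hgeom.mul_left ((K : ℝ) ^ K * (k : ℝ) ^ K))
  calc (cCoeff K k (i + 1) : ℝ) * y ^ (i + 1)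
      ≤ ((K ^ K * ((i + 1) * k) ^ K : ℕ) : ℝ) * y ^ (i + 1) := by
        gcongr
        exact_mod_cast cCoeff_le K k (i + 1) hK
    _ = (K : ℝ) ^ K * (k : ℝ) ^ K * (((i + 1 : ℕ) : ℝ) ^ K * y ^ (i + 1)) := by
        push_cast [mul_pow]
        ring

theorem hasSum_choose_mul_pow_div (K k : ℕ) (hK : 1 ≤ K) (hk : 0 < k) {y : ℝ} (hy₀ : 0 ≤ y)
    (hy₁ : y < 1) :
    HasSum (fun j : ℕ => ((j + K).choose (K - 1) : ℝ) * y ^ (j / k + 1))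
      (∑' i : ℕ, (cCoeff K k (i + 1) : ℝ) * y ^ (i + 1)) := by
  have : NeZero k := ⟨hk.ne'⟩
  refine hasSum_of_hasSum_sum_mul_add (fun j => by positivity) k ?_
  convert (summable_cCoeff_mul_pow K k hK hy₀ hy₁).hasSum with i
  rw [cCoeff_succ, Nat.cast_sum, Finset.sum_mul]
  refine Finset.sum_congr rfl fun r _ => ?_
  rw [Nat.mul_comm, Nat.mul_add_div hk, Nat.div_eq_of_lt r.2, Nat.add_zero]

theorem tauNat_mul_div_radk_mul_pow_le {p : ℕ} (hp : p.Prime) {K k : ℕ} (hK : 1 ≤ K)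
    (hk : 0 < k) {y : ℝ} (hy₀ : 0 ≤ y) (hpy : p * y ≤ 1) (j : ℕ) :
    (tauNat K (p ^ (j + 1)) : ℝ) * ((p : ℝ) ^ (j + 1) / radk k (p ^ (j + 1))) * y ^ (j + 1)
      ≤ ((j + K).choose (K - 1) : ℝ) * y ^ (j / k + 1) := by
  have hp₀ : (0 : ℝ) < p := by exact_mod_cast hp.pos
  have hrad : (p : ℝ) ^ (j / k + 1) ≤ radk k (p ^ (j + 1)) := by
    have hceil : (j + 1) ⌈/⌉ k = j / k + 1 := by
      rw [Nat.ceilDiv_eq_add_pred_div, show j + 1 + k - 1 = j + k by omega,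
        Nat.add_div_right _ hk]
    exact_mod_cast hceil ▸ pow_ceilDiv_le_radk hp hk (j + 1)
  obtain ⟨m, hm⟩ : ∃ m, j + 1 = m + (j / k + 1) := ⟨j - j / k, by have := j.div_le_self k; omega⟩
  have hkey : (p : ℝ) ^ (j + 1) / radk k (p ^ (j + 1)) * y ^ (j + 1) ≤ y ^ (j / k + 1) :=
    calc (p : ℝ) ^ (j + 1) / radk k (p ^ (j + 1)) * y ^ (j + 1)
        ≤ (p : ℝ) ^ (j + 1) / p ^ (j / k + 1) * y ^ (j + 1) := by gcongr
      _ = (p * y) ^ m * y ^ (j / k + 1) := by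
        rw [hm, pow_add, pow_add, mul_div_cancel_right₀ _ (by positivity), mul_pow]
        ring
      _ ≤ y ^ (j / k + 1) :=
        mul_le_of_le_one_left (by positivity) (pow_le_one₀ (by positivity) hpy)
  rw [tauNat_prime_pow hp hK, show j + 1 + K - 1 = j + K by omega, mul_assoc]
  gcongr

/-- for integers `K, k ≥ 2`:
(a) `c_i ≤ K^K · (ik)^K` for all `i ≥ 1`; and
(b) for every prime `p` and real `s > 1`,
`∑_{j ≥ 1} τ_K(p^j) · (p^j / rad_k(p^j)) · p^{−js} ≤ 1 + ∑_{i ≥ 1} c_i · p^{−is}`. -/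
theorem stmt15 (K k : ℕ) (hK : 2 ≤ K) (hk : 2 ≤ k) :
    (∀ i : ℕ, 1 ≤ i → cCoeff K k i ≤ K ^ K * (i * k) ^ K) ∧
    (∀ p : ℕ, p.Prime → ∀ s : ℝ, 1 < s →
      ∑' j : ℕ, (tauNat K (p ^ (j + 1)) : ℝ) *
          ((p : ℝ) ^ (j + 1) / (radk k (p ^ (j + 1)) : ℝ)) *
          (p : ℝ) ^ (-(((j : ℝ) + 1) * s))
        ≤ 1 + ∑' i : ℕ, (cCoeff K k (i + 1) : ℝ) * (p : ℝ) ^ (-(((i : ℝ) + 1) * s))) := by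
  refine ⟨fun i _ => cCoeff_le K k i (by omega), fun p hp s hs => ?_⟩
  have hp₁ : (1 : ℝ) < p := by exact_mod_cast hp.one_lt
  simp only [rpow_neg_natCast_add_one_mul (zero_le_one.trans hp₁.le)]
  set y := (p : ℝ) ^ (-s)
  have hy₀ : 0 ≤ y := by positivity
  have hy₁ : y < 1 := Real.rpow_lt_one_of_one_lt_of_neg hp₁ (by linarith)
  have hpy : (p : ℝ) * y ≤ 1 := by
    rw [← Real.rpow_one_add' (by positivity) (by linarith)]
    exact Real.rpow_le_one_of_one_le_of_nonpos hp₁.le (by linarith)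
  have hg := hasSum_choose_mul_pow_div K k (by omega) (by omega) hy₀ hy₁
  have hFg := tauNat_mul_div_radk_mul_pow_le (K := K) (k := k) hp (by omega) (by omega) hy₀ hpy
  calc _ ≤ ∑' j : ℕ, ((j + K).choose (K - 1) : ℝ) * y ^ (j / k + 1) :=
        (hg.summable.of_nonneg_of_le (fun j => by positivity) hFg).tsum_le_tsum hFg hg.summable
    _ = _ := hg.tsum_eq
    _ ≤ _ := le_add_of_nonneg_left zero_le_one
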